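/- Let J be a letterplace ideal of P̄ with D ⊆ J. Then Sat_L(J) is an L-saturated letterplace ideal of P̄ containing J, and Sat_L(J) ⊆ Sat(J). -/

import Mathlib

noncomputable section

/-! ### Common definitions for the letterplace correspondence (La Scala)

`FA K Y` is the free associative algebra `K⟨Y⟩` (monoid algebra of the free monoid on `Y`);
`PL K Y` is the letterplace polynomial algebra `K[y(j) : y ∈ Y, j ∈ ℕ*]`.
The algebra `F̄ = K⟨X ∪ {t}⟩` is modeled as `FA K (Option X)` with `t = none`,
and similarly `P̄ = PL K (Option X)`. -/

/-- The free associative algebra `K⟨Y⟩`. -/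
abbrev FA (K : Type*) [CommSemiring K] (Y : Type*) := MonoidAlgebra K (FreeMonoid Y)

/-- The letterplace polynomial algebra `K[y(j)]`, with places in `ℕ* = ℕ+`. -/
abbrev PL (K : Type*) [CommSemiring K] (Y : Type*) := MvPolynomial (Y × ℕ+) K

variable (K : Type*) [Field K]

/-- The generator of `K⟨Y⟩` corresponding to a letter. -/
def gen {Y : Type*} (y : Y) : FA K Y := MonoidAlgebra.of K (FreeMonoid Y) (FreeMonoid.of y)

/-- The extra letter `t` of `F̄ = K⟨X ∪ {t}⟩`. -/
def tv {X : Type*} : FA K (Option X) := gen K (none : Option X)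

/-- `φ : F̄ → F̄`, the algebra endomorphism with `φ(x_i) = x_i`, `φ(t) = 1`. -/
def phi {X : Type*} : FA K (Option X) →ₐ[K] FA K (Option X) :=
  (MonoidAlgebra.lift K (FA K (Option X)) (FreeMonoid (Option X)))
    (FreeMonoid.lift fun o => Option.elim o 1 (fun x => gen K (some x)))

/-- `f` is homogeneous of degree `d` (all words in its support have length `d`). -/
def IsHomog {Y : Type*} (d : ℕ) (f : FA K Y) : Prop :=
  ∀ w ∈ f.coeff.support, FreeMonoid.length w = d

/-- The homogeneous component of degree `d` of `f ∈ K⟨Y⟩`. -/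
def homComp {Y : Type*} (d : ℕ) (f : FA K Y) : FA K Y :=
  ∑ w ∈ f.coeff.support.filter (fun w => FreeMonoid.length w = d), MonoidAlgebra.single w (f.coeff w)

/-- A two-sided ideal is graded (for the grading by total degree) iff it contains all
homogeneous components of its elements. -/
def IsGradedF {Y : Type*} (I : TwoSidedIdeal (FA K Y)) : Prop := ∀ f ∈ I, ∀ d, homComp K d f ∈ I

/-- `C ⊆ F̄`: the two-sided ideal generated by all homogeneous elements of `ker φ`,
i.e. the largest graded ideal contained in `ker φ`. -/
def Cideal {X : Type*} : TwoSidedIdeal (FA K (Option X)) :=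
  TwoSidedIdeal.span {f | (∃ d, IsHomog K d f) ∧ phi K f = 0}

/-- The embedding of free monoids `X* → (X ∪ {t})*`. -/
def embWord {X : Type*} : FreeMonoid X →* FreeMonoid (Option X) := FreeMonoid.map some

/-- The canonical embedding `F = K⟨X⟩ → F̄ = K⟨X ∪ {t}⟩`. -/
def emb {X : Type*} : FA K X →ₐ[K] FA K (Option X) :=
  (MonoidAlgebra.lift K (FA K (Option X)) (FreeMonoid X))
    ((MonoidAlgebra.of K (FreeMonoid (Option X))).comp embWord)

/-- The top degree `deg(f)` of `f` (max length of a word in the support). -/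
def degF {Y : Type*} (f : FA K Y) : ℕ := f.coeff.support.sup FreeMonoid.length

/-- The homogenization `f^* = Σ_k f_k t^{deg f − k} ∈ F̄` of `f ∈ F`. -/
def hstar {X : Type*} (f : FA K X) : FA K (Option X) :=
  ∑ w ∈ f.coeff.support,
    MonoidAlgebra.single
      (embWord w * (FreeMonoid.of (none : Option X)) ^ (degF K f - FreeMonoid.length w)) (f.coeff w)

/-- Homogenization of an element already written in `F̄` (used for elements of `φ(F̄) = F`). -/
def hstarO {X : Type*} (f : FA K (Option X)) : FA K (Option X) :=
  ∑ w ∈ f.coeff.support,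
    MonoidAlgebra.single
      (w * (FreeMonoid.of (none : Option X)) ^ (degF K f - FreeMonoid.length w)) (f.coeff w)

/-- The homogenization `I^*` of an ideal `I ⊆ F`: the two-sided ideal of `F̄` generated by all
homogeneous elements of `φ⁻¹(I)` (identifying `F` with its image in `F̄`). -/
def hstarIdeal {X : Type*} (I : TwoSidedIdeal (FA K X)) : TwoSidedIdeal (FA K (Option X)) :=
  TwoSidedIdeal.span {g | (∃ d, IsHomog K d g) ∧ ∃ f ∈ I, phi K g = emb K f}

/-- The saturation `Sat(J) = φ(J)^*` of a graded ideal `C ⊆ J ⊆ F̄`: the two-sided ideal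
generated by all homogeneous elements `g` with `φ(g) ∈ φ(J)`. -/
def SatF {X : Type*} (J : TwoSidedIdeal (FA K (Option X))) : TwoSidedIdeal (FA K (Option X)) :=
  TwoSidedIdeal.span {g | (∃ d, IsHomog K d g) ∧ ∃ h ∈ J, phi K g = phi K h}

/-! ### The commutative (letterplace) side -/

/-- The shift of letterplace variables: `k · y(j) = y(j + k)`. -/
def shiftVar {Y : Type*} (k : ℕ) (p : Y × ℕ+) : Y × ℕ+ :=
  (p.1, ⟨p.2 + k, Nat.add_pos_left p.2.2 k⟩)

/-- The action of `k ∈ ℕ` on the letterplace algebra. -/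
def shift {Y : Type*} (k : ℕ) : PL K Y →ₐ[K] PL K Y := MvPolynomial.rename (shiftVar k)

/-- An ideal of `PL K Y` is an ℕ-ideal if it is stable under all shifts. -/
def IsNIdeal {Y : Type*} (I : Ideal (PL K Y)) : Prop := ∀ k, ∀ f ∈ I, shift K k f ∈ I

/-- The ℕ-ideal `⟨S⟩_ℕ` generated by a set `S`. -/
def nspan {Y : Type*} (S : Set (PL K Y)) : Ideal (PL K Y) :=
  Ideal.span {g | ∃ k, ∃ f ∈ S, g = shift K k f}

/-- The place multidegree `∂(m)` of a monomial. -/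
def placeDeg {Y : Type*} (m : (Y × ℕ+) →₀ ℕ) : ℕ+ →₀ ℕ := Finsupp.mapDomain Prod.snd m

/-- `f` is multihomogeneous of place multidegree `μ`. -/
def IsMultiHomog {Y : Type*} (μ : ℕ+ →₀ ℕ) (f : PL K Y) : Prop :=
  ∀ m ∈ f.support, placeDeg m = μ

/-- The multihomogeneous component of multidegree `μ` of `f`. -/
def mComp {Y : Type*} (μ : ℕ+ →₀ ℕ) (f : PL K Y) : PL K Y :=
  ∑ m ∈ f.support.filter (fun m => placeDeg m = μ),
    MvPolynomial.monomial m (MvPolynomial.coeff m f)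

/-- An ideal is multigraded iff it contains all multihomogeneous components of its elements. -/
def IsMultiGraded {Y : Type*} (I : Ideal (PL K Y)) : Prop := ∀ f ∈ I, ∀ μ, mComp K μ f ∈ I

/-- `ψ : P̄ → P̄`, with `ψ(x_i(j)) = x_i(j)` and `ψ(t(j)) = 1`. -/
def psi {X : Type*} : PL K (Option X) →ₐ[K] PL K (Option X) :=
  MvPolynomial.aeval (fun p => Option.elim p.1 1 (fun x => MvPolynomial.X (some x, p.2)))

/-- The canonical embedding `P → P̄`. -/
def embP {X : Type*} : PL K X →ₐ[K] PL K (Option X) :=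
  MvPolynomial.rename (fun p => (some p.1, p.2))

/-- The top multidegree `∂(f)` of `f` (componentwise max over the support). -/
def topDeg {Y : Type*} (f : PL K Y) : ℕ+ →₀ ℕ := f.support.sup placeDeg

/-- The pure-`t` monomial `∏_k t(k)^{ν_k}` with exponents `ν`. -/
def tExp {X : Type*} (ν : ℕ+ →₀ ℕ) : ((Option X) × ℕ+) →₀ ℕ :=
  Finsupp.mapDomain (fun k => ((none : Option X), k)) ν

/-- The multihomogenization `f^* = Σ_μ f_μ ∏_k t(k)^{ν_k − μ_k} ∈ P̄` of `f ∈ P`. -/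
def mhstar {X : Type*} (f : PL K X) : PL K (Option X) :=
  ∑ m ∈ f.support,
    MvPolynomial.monomial
      (Finsupp.mapDomain (fun p => ((some p.1 : Option X), p.2)) m +
        tExp (topDeg K f - placeDeg m))
      (MvPolynomial.coeff m f)

/-- Multihomogenization of an element already written in `P̄` (used for elements of `ψ(P̄) = P`). -/
def mhstarO {X : Type*} (f : PL K (Option X)) : PL K (Option X) :=
  ∑ m ∈ f.support,
    MvPolynomial.monomial (m + tExp (topDeg K f - placeDeg m)) (MvPolynomial.coeff m f)

/-- The multihomogenization `I^*` of an ℕ-ideal `I ⊆ P`: the ℕ-ideal of `P̄` generated by all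
multihomogeneous elements of `ψ⁻¹(I)` (identifying `P` with its image in `P̄`). -/
def mhstarIdeal {X : Type*} (I : Ideal (PL K X)) : Ideal (PL K (Option X)) :=
  nspan K {g | (∃ μ, IsMultiHomog K μ g) ∧ ∃ f ∈ I, psi K g = embP K f}

/-- The saturation `Sat(J) = ψ(J)^*` of a multigraded ℕ-ideal `J ⊆ P̄`. -/
def SatP {X : Type*} (J : Ideal (PL K (Option X))) : Ideal (PL K (Option X)) :=
  nspan K {g | (∃ μ, IsMultiHomog K μ g) ∧ ∃ h ∈ J, psi K g = psi K h}

/-! ### The letterplace embedding -/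

/-- Exponent vector of the letterplace monomial `y_1(n+1) y_2(n+2) ⋯` of a word. -/
def wordExpAux {Y : Type*} : ℕ → List Y → ((Y × ℕ+) →₀ ℕ)
  | _, [] => 0
  | n, y :: w => Finsupp.single (y, ⟨n + 1, n.succ_pos⟩) 1 + wordExpAux (n + 1) w

/-- The letterplace monomial `y_1(1) y_2(2) ⋯ y_d(d)` of a word `y_1 y_2 ⋯ y_d`. -/
def wordExp {Y : Type*} (w : FreeMonoid Y) : (Y × ℕ+) →₀ ℕ := wordExpAux 0 (FreeMonoid.toList w)

/-- The letterplace embedding `ι : K⟨Y⟩ → PL K Y` (a `K`-linear map). -/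
def iota {Y : Type*} (f : FA K Y) : PL K Y :=
  Finsupp.sum f.coeff fun w c => MvPolynomial.monomial (wordExp w) c

/-- The set `L` of multilinear elements of `PL K Y`: multihomogeneous elements of `V = Im ι`. -/
def Lset {Y : Type*} : Set (PL K Y) :=
  {f | f ∈ Set.range (iota K (Y := Y)) ∧ ∃ μ, IsMultiHomog K μ f}

/-- A letterplace ideal (`L`-ideal): an ℕ-ideal ℕ-generated by its multilinear elements. -/
def IsLPIdeal {Y : Type*} (J : Ideal (PL K Y)) : Prop :=
  IsNIdeal K J ∧ J = nspan K ((J : Set (PL K Y)) ∩ Lset K)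

/-- The generators `x_i(1)t(2) − t(1)x_i(2)` of `D`. -/
def Dgens (X : Type*) : Set (PL K (Option X)) :=
  {g | ∃ x : X,
    g = MvPolynomial.X ((some x : Option X), (1 : ℕ+)) *
          MvPolynomial.X ((none : Option X), (2 : ℕ+)) -
        MvPolynomial.X ((none : Option X), (1 : ℕ+)) *
          MvPolynomial.X ((some x : Option X), (2 : ℕ+))}

/-- The generators `ῑ([t, x_i]) = t(1)x_i(2) − x_i(1)t(2)` of `D`. -/
def DgensT (X : Type*) : Set (PL K (Option X)) :=
  {g | ∃ x : X,
    g = MvPolynomial.X ((none : Option X), (1 : ℕ+)) *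
          MvPolynomial.X ((some x : Option X), (2 : ℕ+)) -
        MvPolynomial.X ((some x : Option X), (1 : ℕ+)) *
          MvPolynomial.X ((none : Option X), (2 : ℕ+))}

/-- `D ⊆ P̄`: the letterplace analogue of `C`. -/
def Did (X : Type*) : Ideal (PL K (Option X)) := nspan K (Dgens K X)

/-- The product `∏_{d < k ≤ d'} t(k)`. -/
def tProd (X : Type*) (d d' : ℕ) : PL K (Option X) :=
  ∏ k ∈ Finset.range (d' - d), MvPolynomial.X ((none : Option X), ⟨d + k + 1, Nat.succ_pos _⟩)

/-- The `L`-saturation `Sat_L(J)` of a letterplace ideal `D ⊆ J ⊆ P̄`. -/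
def SatL {X : Type*} (J : Ideal (PL K (Option X))) : Ideal (PL K (Option X)) :=
  nspan K {f | f ∈ Lset K ∧ ∃ d', MvPolynomial.totalDegree f ≤ d' ∧
    tProd K X (MvPolynomial.totalDegree f) d' * f ∈ J}

/-- `J` is `L`-saturated: `t(d+1)·f ∈ J` with `f` multilinear of degree `d` implies `f ∈ J`. -/
def IsLSat {X : Type*} (J : Ideal (PL K (Option X))) : Prop :=
  ∀ f ∈ Lset K (Y := Option X),
    MvPolynomial.X ((none : Option X), ⟨MvPolynomial.totalDegree f + 1, Nat.succ_pos _⟩) * f ∈ J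
      → f ∈ J

/-! ### Monomial orderings -/

/-- The shift action on letterplace monomials. -/
def shiftMon {Y : Type*} (k : ℕ) (m : (Y × ℕ+) →₀ ℕ) : (Y × ℕ+) →₀ ℕ :=
  Finsupp.mapDomain (shiftVar k) m

/-- A monomial ordering of a (possibly infinite) commutative polynomial ring, given as a strict
order relation on exponent vectors: a well-founded strict total order with `1` minimal,
compatible with multiplication of monomials. -/
structure IsMonOrd {σ : Type*} (r : (σ →₀ ℕ) → (σ →₀ ℕ) → Prop) : Prop where
  total : ∀ m n, r m n ∨ m = n ∨ r n m
  irrefl : ∀ m, ¬ r m m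
  trans : ∀ a b c, r a b → r b c → r a c
  wf : WellFounded r
  zero_min : ∀ m, ¬ r m 0
  add_compat : ∀ m n u, r m n → r (u + m) (u + n)

/-- The ordering is compatible with the ℕ-action (an `ℕ`-ordering). -/
def IsNCompat {Y : Type*} (r : ((Y × ℕ+) →₀ ℕ) → ((Y × ℕ+) →₀ ℕ) → Prop) : Prop :=
  ∀ (k : ℕ) m n, r m n → r (shiftMon k m) (shiftMon k n)

/-- The weight of a letterplace monomial: the largest place index occurring in it
(`⊥ = -∞` for the monomial `1`). -/
def wt {Y : Type*} (m : (Y × ℕ+) →₀ ℕ) : WithBot ℕ :=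
  m.support.sup (fun p => ((p.2 : ℕ) : WithBot ℕ))

/-- A weighted ordering: smaller weight implies smaller monomial. -/
def IsWeighted {Y : Type*} (r : ((Y × ℕ+) →₀ ℕ) → ((Y × ℕ+) →₀ ℕ) → Prop) : Prop :=
  ∀ m n, wt m < wt n → r m n

/-- A monomial ordering of the free algebra `K⟨Y⟩`: a well-founded strict total order on words
compatible with two-sided multiplication. -/
structure IsWordOrd {Y : Type*} (r : FreeMonoid Y → FreeMonoid Y → Prop) : Prop where
  total : ∀ m n, r m n ∨ m = n ∨ r n m
  irrefl : ∀ m, ¬ r m m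
  trans : ∀ a b c, r a b → r b c → r a c
  wf : WellFounded r
  mul_compat : ∀ m n u v, r m n → r (u * m * v) (u * n * v)

/-- A word ordering is graded if shorter words are smaller. -/
def IsGradedWordOrd {Y : Type*} (r : FreeMonoid Y → FreeMonoid Y → Prop) : Prop :=
  ∀ m n, FreeMonoid.length m < FreeMonoid.length n → r m n

/-- The word ordering of `K⟨Y⟩` induced by a monomial ordering of `PL K Y` via `ι`. -/
def inducedWordOrd {Y : Type*} (r : ((Y × ℕ+) →₀ ℕ) → ((Y × ℕ+) →₀ ℕ) → Prop)
    (m n : FreeMonoid Y) : Prop := r (wordExp m) (wordExp n)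

/-- The factor of a letterplace monomial at place `j` (a monomial of `P(j) ≅ P(1)`). -/
def fiber {Y : Type*} (m : (Y × ℕ+) →₀ ℕ) (j : ℕ+) : Y →₀ ℕ :=
  Finsupp.comapDomain (fun y => (y, j)) m (fun _ _ _ _ h => congrArg Prod.fst h)

/-- The place `ℕ`-ordering of `PL K Y` induced by a monomial ordering `r1` of `P(1)`:
compare the factors at the highest place where the two monomials differ. -/
def placeExt {Y : Type*} (r1 : (Y →₀ ℕ) → (Y →₀ ℕ) → Prop)
    (m n : (Y × ℕ+) →₀ ℕ) : Prop :=
  ∃ j : ℕ+, r1 (fiber m j) (fiber n j) ∧ ∀ j', j < j' → fiber m j' = fiber n j'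

/-! ### Leading monomials and Gröbner bases -/

/-- `m` is the leading monomial of `f ∈ PL K Y` with respect to the ordering `r`. -/
def IsLM {Y : Type*} (r : ((Y × ℕ+) →₀ ℕ) → ((Y × ℕ+) →₀ ℕ) → Prop)
    (f : PL K Y) (m : (Y × ℕ+) →₀ ℕ) : Prop :=
  m ∈ f.support ∧ ∀ m' ∈ f.support, m' ≠ m → r m' m

/-- `LM(S)`: the ideal generated by the leading monomials of the nonzero elements of `S`. -/
def LMideal {Y : Type*} (r : ((Y × ℕ+) →₀ ℕ) → ((Y × ℕ+) →₀ ℕ) → Prop)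
    (S : Set (PL K Y)) : Ideal (PL K Y) :=
  Ideal.span {p | ∃ f ∈ S, f ≠ 0 ∧ ∃ m, IsLM K r f m ∧ p = MvPolynomial.monomial m (1 : K)}

/-- The ideal generated by `ℕ·lm(G)`. -/
def shLMideal {Y : Type*} (r : ((Y × ℕ+) →₀ ℕ) → ((Y × ℕ+) →₀ ℕ) → Prop)
    (G : Set (PL K Y)) : Ideal (PL K Y) :=
  Ideal.span {p | ∃ g ∈ G, g ≠ 0 ∧ ∃ m, IsLM K r g m ∧
    ∃ k : ℕ, p = MvPolynomial.monomial (shiftMon k m) (1 : K)}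

/-- `G ⊆ I` is a Gröbner `ℕ`-basis of the ℕ-ideal `I`: `ℕ·lm(G)` generates `LM(I)`. -/
def IsGroebnerNB {Y : Type*} (r : ((Y × ℕ+) →₀ ℕ) → ((Y × ℕ+) →₀ ℕ) → Prop)
    (I : Ideal (PL K Y)) (G : Set (PL K Y)) : Prop :=
  G ⊆ (I : Set (PL K Y)) ∧ shLMideal K r G = LMideal K r (I : Set (PL K Y))

/-- `G` is a Gröbner `L`-basis of the letterplace ideal `J`: `G ⊆ J ∩ L` and the leading monomial
of every nonzero multilinear element of `J` is divisible by a shift of some `lm(g)`, `g ∈ G`. -/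
def IsGroebnerLB {Y : Type*} (r : ((Y × ℕ+) →₀ ℕ) → ((Y × ℕ+) →₀ ℕ) → Prop)
    (J : Ideal (PL K Y)) (G : Set (PL K Y)) : Prop :=
  G ⊆ (J : Set (PL K Y)) ∩ Lset K ∧
  ∀ f ∈ (J : Set (PL K Y)) ∩ Lset K, f ≠ 0 →
    ∃ g ∈ G, ∃ (k : ℕ) (mg mf : (Y × ℕ+) →₀ ℕ),
      IsLM K r g mg ∧ IsLM K r f mf ∧ shiftMon k mg ≤ mf

/-- `w` is the leading monomial (word) of `f ∈ K⟨Y⟩` with respect to the word ordering `r'`. -/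
def IsLMF {Y : Type*} (r' : FreeMonoid Y → FreeMonoid Y → Prop)
    (f : FA K Y) (w : FreeMonoid Y) : Prop :=
  w ∈ f.coeff.support ∧ ∀ w' ∈ f.coeff.support, w' ≠ w → r' w' w

/-- `G ⊆ I` is a Gröbner basis of the two-sided ideal `I ⊆ K⟨Y⟩`: the leading word of every
nonzero `f ∈ I` has the form `u · lm(g) · v` for some nonzero `g ∈ G`. -/
def IsGroebnerBF {Y : Type*} (r' : FreeMonoid Y → FreeMonoid Y → Prop)
    (I : TwoSidedIdeal (FA K Y)) (G : Set (FA K Y)) : Prop :=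
  G ⊆ (I : Set (FA K Y)) ∧
  ∀ f ∈ I, f ≠ 0 → ∃ g ∈ G, g ≠ 0 ∧ ∃ (u v wf wg : FreeMonoid Y),
    IsLMF K r' f wf ∧ IsLMF K r' g wg ∧ wf = u * wg * v

/-! ### Normal forms -/

/-- The generators `x_i(1) x_j(1)` of `N`. -/
def Ngens (Y : Type*) : Set (PL K Y) :=
  {g | ∃ i j : Y, g = MvPolynomial.X (i, (1 : ℕ+)) * MvPolynomial.X (j, (1 : ℕ+))}

/-- A polynomial is in normal form modulo `N` iff in each of its monomials all place indices
are pairwise distinct. -/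
def NormalModN {Y : Type*} (f : PL K Y) : Prop :=
  ∀ m ∈ f.support, ∀ k : ℕ+, placeDeg m k ≤ 1

/-- A polynomial is in normal form modulo `D` iff none of its monomials is divisible by a shift
of the leading monomial of some generator `t(1)x_i(2) − x_i(1)t(2)` of `D`. -/
def NormalModD {X : Type*} (r : (((Option X) × ℕ+) →₀ ℕ) → (((Option X) × ℕ+) →₀ ℕ) → Prop)
    (f : PL K (Option X)) : Prop :=
  ∀ m ∈ f.support, ∀ g ∈ DgensT K X, ∀ mg, IsLM K r g mg → ∀ k : ℕ, ¬ shiftMon k mg ≤ m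

/-- `G` is a Gröbner `L`-basis of `J` modulo `D`: its elements are multilinear elements of `J`
in normal form modulo `D`, and together with the generators of `D` they form a
Gröbner `L`-basis of `J`. -/
def IsGroebnerLBmodD {X : Type*}
    (r : (((Option X) × ℕ+) →₀ ℕ) → (((Option X) × ℕ+) →₀ ℕ) → Prop)
    (J : Ideal (PL K (Option X))) (G : Set (PL K (Option X))) : Prop :=
  (∀ g ∈ G, g ∈ (J : Set (PL K (Option X))) ∩ Lset K ∧ NormalModD K r g) ∧
  IsGroebnerLB K r J (G ∪ DgensT K X)

/-- The commutators `[t, x_i] = t x_i − x_i t` in `F̄`. -/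
def commGens (X : Type*) : Set (FA K (Option X)) :=
  {h | ∃ x : X, h = tv K * gen K (some x) - gen K (some x) * tv K}

/-- A polynomial of `F̄` is in normal form modulo `C` iff none of its words contains the leading
word of some commutator `[t, x_i]` as a factor. -/
def NormalModC {X : Type*} (r' : FreeMonoid (Option X) → FreeMonoid (Option X) → Prop)
    (f : FA K (Option X)) : Prop :=
  ∀ w ∈ f.coeff.support, ∀ g ∈ commGens K X, ∀ wg, IsLMF K r' g wg →
    ¬ ∃ u v, w = u * wg * v

/-! ### Concrete orderings on words -/

/-- The order on the letters of `X ∪ {t}` (with `X = ℕ`): `t ≺ x_1 ≺ x_2 ≺ ⋯`. -/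
def optLt : Option ℕ → Option ℕ → Prop
  | none, some _ => True
  | some i, some j => i < j
  | _, none => False

/-- The graded right lexicographic ordering on words: first compare lengths, then compare
letter by letter from the right. -/
def grRightLex {Y : Type*} (lt : Y → Y → Prop) (dflt : Y) (m n : FreeMonoid Y) : Prop :=
  FreeMonoid.length m < FreeMonoid.length n ∨
  (FreeMonoid.length m = FreeMonoid.length n ∧
    ∃ t < FreeMonoid.length m,
      lt ((FreeMonoid.toList m).getD t dflt) ((FreeMonoid.toList n).getD t dflt) ∧
      ∀ s, t < s → (FreeMonoid.toList m).getD s dflt = (FreeMonoid.toList n).getD s dflt)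

end

/-!
Modulo `D` a letter and a following `t` commute: `y(j) t(j+1) ≡ t(j) y(j+1)`. So if
`t(d+1) ⋯ t(d+E) · u ∈ J` for a multilinear `u` of degree `d`, then after multiplying `u` by
letters at the places to its right, the block of `t`'s can be pushed past them to the right end.
Hence the elements `g` with `t(e+1) ⋯ t(e+E) g ∈ J` for some `E` form an ideal which contains the
component of multidegree `(1, …, 1)` (places `1, …, e`) of every element of `Sat_L(J)`; applied to
`t(d+1) f` this is `L`-saturation. The other claims are formal, as `ψ` sends every `t(k)` to `1`.
-/

open MvPolynomial

section Places

noncomputable def placeIoc (a b : ℕ) : ℕ+ →₀ ℕ :=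
  ∑ k ∈ Finset.range (b - a), Finsupp.single (a + k).succPNat 1

lemma placeIoc_apply (a b : ℕ) (j : ℕ+) :
    placeIoc a b j = if a < (j : ℕ) ∧ (j : ℕ) ≤ b then 1 else 0 := by
  simp only [placeIoc, Finsupp.finsetSum_apply, Finsupp.single_apply, ← PNat.coe_inj,
    Nat.succPNat_coe]
  split_ifs with h
  · rw [Finset.sum_eq_single ((j : ℕ) - a - 1)]
    · rw [if_pos (by omega)]
    · intro k _ hk
      rw [if_neg (by omega)]
    · intro hk
      simp only [Finset.mem_range] at hk
      omega
  · refine Finset.sum_eq_zero fun k hk => if_neg ?_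
    simp only [Finset.mem_range] at hk
    omega

lemma placeIoc_self (a : ℕ) : placeIoc a a = 0 := by
  simp [placeIoc]

lemma placeIoc_succ_right {a b : ℕ} (h : a ≤ b) :
    placeIoc a (b + 1) = placeIoc a b + Finsupp.single b.succPNat 1 := by
  rw [placeIoc, show b + 1 - a = b - a + 1 by omega, Finset.sum_range_succ,
    show a + (b - a) = b by omega, placeIoc]

lemma degree_placeIoc (a b : ℕ) : (placeIoc a b).degree = b - a := by
  simp [placeIoc, map_sum]

def shiftPlace (k : ℕ) (j : ℕ+) : ℕ+ := ⟨j + k, Nat.add_pos_left j.2 k⟩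

lemma mapDomain_shiftPlace_placeIoc (k a b : ℕ) :
    (placeIoc a b).mapDomain (shiftPlace k) = placeIoc (a + k) (b + k) := by
  simp only [placeIoc, Finsupp.mapDomain_finsetSum, show b + k - (a + k) = b - a by omega]
  refine Finset.sum_congr rfl fun j _ => ?_
  rw [Finsupp.mapDomain_single]
  congr 1
  exact PNat.coe_injective (by simp only [shiftPlace, Nat.succPNat_coe, PNat.mk_coe]; omega)

lemma placeIoc_of_add_eq {μ : ℕ+ →₀ ℕ} {a b e : ℕ} (h : μ + placeIoc a b = placeIoc 0 e)
    {j : ℕ+} (hj : b < j) : μ j = placeIoc b e j := by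
  have := DFunLike.congr_fun h j
  simp only [Finsupp.add_apply, placeIoc_apply] at this ⊢
  split_ifs at this ⊢ <;> omega

lemma le_of_add_placeIoc_eq {μ : ℕ+ →₀ ℕ} {a b e : ℕ} (h : μ + placeIoc a b = placeIoc 0 e)
    (hab : a < b) : b ≤ e := by
  by_contra hbe
  have := DFunLike.congr_fun h (b - 1).succPNat
  rw [Finsupp.add_apply, placeIoc_apply, placeIoc_apply,
    if_pos (by simp only [Nat.succPNat_coe]; omega),
    if_neg (by simp only [Nat.succPNat_coe]; omega)] at this
  omega

end Places

section NIdeals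

variable {K : Type*} [Field K] {Y : Type*}

lemma shiftVar_succPNat (k n : ℕ) (y : Y) : shiftVar k (y, n.succPNat) = (y, (n + k).succPNat) :=
  Prod.ext rfl (PNat.coe_injective (by simp only [shiftVar, Nat.succPNat_coe, PNat.mk_coe]; omega))

lemma shift_shift (k k' : ℕ) (f : PL K Y) : shift K k (shift K k' f) = shift K (k' + k) f := by
  rw [shift, shift, shift, rename_rename]
  congr 2
  funext p
  exact Prod.ext rfl (PNat.coe_injective (Nat.add_assoc _ _ _))

lemma shift_zero (f : PL K Y) : shift K 0 f = f := by
  rw [shift, show shiftVar (Y := Y) 0 = id from rfl, rename_id_apply]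

lemma subset_nspan (S : Set (PL K Y)) : S ⊆ nspan K S :=
  fun f hf => Ideal.subset_span ⟨0, f, hf, (shift_zero f).symm⟩

lemma nspan_mono {S T : Set (PL K Y)} (h : S ⊆ T) : nspan K S ≤ nspan K T :=
  Ideal.span_mono fun _ ⟨k, f, hf, hg⟩ => ⟨k, f, h hf, hg⟩

lemma isNIdeal_nspan (S : Set (PL K Y)) : IsNIdeal K (nspan K S) := by
  intro k f hf
  have := Ideal.mem_map_of_mem (shift K k) hf
  rw [nspan, Ideal.map_span] at this
  refine Ideal.span_mono ?_ this
  rintro _ ⟨_, ⟨k', f', hf', rfl⟩, rfl⟩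
  exact ⟨k' + k, f', hf', shift_shift k k' f'⟩

lemma nspan_le {S : Set (PL K Y)} {I : Ideal (PL K Y)} (hI : IsNIdeal K I) (hS : S ⊆ I) :
    nspan K S ≤ I := by
  rw [nspan, Ideal.span_le]
  rintro _ ⟨k, f, hf, rfl⟩
  exact hI k f (hS hf)

end NIdeals

section TProd

variable {K : Type*} [Field K] {X : Type*}

lemma tProd_self (d : ℕ) : tProd K X d d = 1 := by
  simp [tProd]

lemma tProd_mul_tProd {a b c : ℕ} (hab : a ≤ b) (hbc : b ≤ c) :
    tProd K X a b * tProd K X b c = tProd K X a c := by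
  rw [tProd, tProd, tProd, show c - a = (b - a) + (c - b) by omega, Finset.prod_range_add]
  congr 1
  refine Finset.prod_congr rfl fun k _ => ?_
  congr 3
  omega

lemma X_mul_tProd {a b : ℕ} (h : a < b) :
    MvPolynomial.X ((none : Option X), a.succPNat) * tProd K X (a + 1) b = tProd K X a b := by
  rw [← tProd_mul_tProd (Nat.le_add_right a 1) h]
  simp only [tProd, Nat.add_sub_cancel_left, Finset.prod_range_one, Nat.add_zero]
  rfl

lemma shift_tProd (k d d' : ℕ) : shift K k (tProd K X d d') = tProd K X (d + k) (d' + k) := by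
  rw [tProd, tProd, map_prod, show d' + k - (d + k) = d' - d by omega]
  refine Finset.prod_congr rfl fun j _ => ?_
  have := shiftVar_succPNat k (d + j) (none : Option X)
  rw [add_right_comm] at this
  rw [shift, rename_X]
  exact congrArg MvPolynomial.X this

lemma psi_tProd (d d' : ℕ) : psi K (tProd K X d d') = 1 := by
  simp [tProd, psi]

def tColon (J : Ideal (PL K (Option X))) (e : ℕ) : Ideal (PL K (Option X)) where
  carrier := {g | ∃ E, tProd K X e (e + E) * g ∈ J}
  zero_mem' := ⟨0, by simp⟩
  add_mem' := by
    rintro g g' ⟨E, hE⟩ ⟨E', hE'⟩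
    have widen : ∀ {E F} {g}, E ≤ F → tProd K X e (e + E) * g ∈ J →
        tProd K X e (e + F) * g ∈ J := fun {E F g} hEF h => by
      rw [← tProd_mul_tProd (Nat.le_add_right e E) (by omega), mul_right_comm]
      exact J.mul_mem_right _ h
    exact ⟨max E E', mul_add (tProd K X e (e + max E E')) g g' ▸
      J.add_mem (widen (le_max_left E E') hE) (widen (le_max_right E E') hE')⟩
  smul_mem' := by
    rintro c g ⟨E, hE⟩
    exact ⟨E, by rw [smul_eq_mul, mul_left_comm]; exact J.mul_mem_left c hE⟩

end TProd

section Multigrading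

variable {K : Type*} [Field K] {Y : Type*}

/-- With this weight, weighted homogeneity is multihomogeneity for place multidegrees. -/
noncomputable def placeWeight (p : Y × ℕ+) : ℕ+ →₀ ℕ := Finsupp.single p.2 1

lemma weight_placeWeight (m : (Y × ℕ+) →₀ ℕ) : Finsupp.weight placeWeight m = placeDeg m := by
  simp only [Finsupp.weight_apply, placeWeight, Finsupp.smul_single_one, placeDeg,
    Finsupp.mapDomain]

lemma exists_eq_single_add_of_placeDeg_pos {m : (Y × ℕ+) →₀ ℕ} {j : ℕ+}
    (h : 0 < placeDeg m j) : ∃ y m', m = Finsupp.single (y, j) 1 + m' := by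
  classical
  have hj : j ∈ (placeDeg m).support := Finsupp.mem_support_iff.mpr h.ne'
  obtain ⟨⟨y, j⟩, hp, rfl⟩ := Finset.mem_image.mp (Finsupp.mapDomain_support hj)
  refine ⟨y, m - Finsupp.single (y, j) 1, (add_tsub_cancel_of_le ?_).symm⟩
  exact Finsupp.single_le_iff.mpr (Nat.one_le_iff_ne_zero.mpr (Finsupp.mem_support_iff.mp hp))

lemma isMultiHomog_iff {μ : ℕ+ →₀ ℕ} {f : PL K Y} :
    IsMultiHomog K μ f ↔ IsWeightedHomogeneous placeWeight f μ := by
  simp only [IsMultiHomog, IsWeightedHomogeneous, mem_support_iff, weight_placeWeight]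

lemma shiftVar_injective (k : ℕ) : Function.Injective (shiftVar (Y := Y) k) := by
  rintro ⟨y, j⟩ ⟨y', j'⟩ h
  have hj : (j : ℕ) + k = j' + k := congrArg (fun p : Y × ℕ+ => (p.2 : ℕ)) h
  exact Prod.ext (congrArg Prod.fst h :) (PNat.coe_injective (Nat.add_right_cancel hj))

lemma isWeightedHomogeneous_shift {μ : ℕ+ →₀ ℕ} {f : PL K Y}
    (h : IsWeightedHomogeneous placeWeight f μ) (k : ℕ) :
    IsWeightedHomogeneous placeWeight (shift K k f) (μ.mapDomain (shiftPlace k)) := by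
  classical
  intro n hn
  rw [shift, ← mem_support_iff, support_rename_of_injective (shiftVar_injective k),
    Finset.mem_image] at hn
  obtain ⟨n, hn, rfl⟩ := hn
  rw [← h (mem_support_iff.mp hn), weight_placeWeight, weight_placeWeight, placeDeg, placeDeg,
    ← Finsupp.mapDomain_comp, ← Finsupp.mapDomain_comp]
  rfl

lemma MvPolynomial.IsWeightedHomogeneous.isHomogeneous_degree {μ : ℕ+ →₀ ℕ} {f : PL K Y}
    (h : IsWeightedHomogeneous placeWeight f μ) : IsHomogeneous f μ.degree := by
  intro n hn
  rw [← h hn, weight_placeWeight, placeDeg, Finsupp.degree_mapDomain, Finsupp.degree_eq_weight_one]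
  rfl

lemma placeDeg_wordExpAux (l : List Y) (n : ℕ) :
    placeDeg (wordExpAux n l) = placeIoc n (n + l.length) := by
  induction l generalizing n with
  | nil => simp [wordExpAux, placeDeg, placeIoc_self]
  | cons y l ih =>
    change placeDeg (Finsupp.single (y, n.succPNat) 1 + wordExpAux (n + 1) l) = _
    ext j
    rw [placeDeg, Finsupp.mapDomain_add, Finsupp.mapDomain_single, Finsupp.add_apply, ← placeDeg,
      ih, Finsupp.single_apply, placeIoc_apply, placeIoc_apply]
    simp only [← PNat.coe_inj, Nat.succPNat_coe, List.length_cons]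
    split_ifs <;> omega

lemma exists_wordExp_of_mem_support_iota {g : FA K Y} {n : (Y × ℕ+) →₀ ℕ}
    (hn : n ∈ (iota K g).support) : ∃ w, wordExp w = n := by
  classical
  obtain ⟨w, -, hw⟩ := Finset.mem_biUnion.mp (support_sum hn)
  exact ⟨w, (Finset.mem_singleton.mp (support_monomial_subset hw)).symm⟩

lemma isWeightedHomogeneous_of_mem_Lset {f : PL K Y} (hf : f ∈ Lset K) :
    IsWeightedHomogeneous placeWeight f (placeIoc 0 f.totalDegree) := by
  obtain ⟨⟨g, rfl⟩, μ, hμ⟩ := hf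
  rw [isMultiHomog_iff] at hμ
  by_cases hg : iota K g = 0
  · rw [hg]
    exact isWeightedHomogeneous_zero _ _ _
  obtain ⟨n, hn⟩ := exists_coeff_ne_zero hg
  obtain ⟨w, rfl⟩ := exists_wordExp_of_mem_support_iota (mem_support_iff.mpr hn)
  have hμw : μ = placeIoc 0 (FreeMonoid.toList w).length := by
    rw [← hμ hn, weight_placeWeight, wordExp, placeDeg_wordExpAux, zero_add]
  have hdeg := hμ.isHomogeneous_degree.totalDegree hg
  rw [hμw, degree_placeIoc, Nat.sub_zero] at hdeg
  rwa [hdeg, ← hμw]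

end Multigrading

section DRelations

variable {K : Type*} [Field K] {X : Type*} {J : Ideal (PL K (Option X))}

lemma X_mul_t_sub_t_mul_X_mem (hD : Did K X ≤ J) (y : Option X) (j : ℕ) :
    MvPolynomial.X (y, j.succPNat) * MvPolynomial.X (none, (j + 1).succPNat) -
      MvPolynomial.X (none, j.succPNat) * MvPolynomial.X (y, (j + 1).succPNat) ∈ J := by
  cases y with
  | none => rw [mul_comm, sub_self]; exact J.zero_mem
  | some x =>
    have hgen : shift K j (MvPolynomial.X ((some x : Option X), (0 : ℕ).succPNat) *
        MvPolynomial.X (none, (1 : ℕ).succPNat) - MvPolynomial.X (none, (0 : ℕ).succPNat) *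
        MvPolynomial.X (some x, (1 : ℕ).succPNat)) ∈ Did K X :=
      Ideal.subset_span ⟨j, _, ⟨x, rfl⟩, rfl⟩
    simp only [shift, map_sub, map_mul, rename_X, shiftVar_succPNat, zero_add, add_comm 1 j]
      at hgen
    exact hD hgen

lemma X_mul_tProd_sub_tProd_mul_X_mem (hD : Did K X ≤ J) (y : Option X) (p r : ℕ) :
    MvPolynomial.X (y, p.succPNat) * tProd K X (p + 1) (p + 1 + r) -
      tProd K X p (p + r) * MvPolynomial.X (y, (p + r).succPNat) ∈ J := by
  induction r generalizing p with
  | zero => simp [tProd_self]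
  | succ r ih =>
    have hcomm := Ideal.Quotient.eq.mpr (X_mul_t_sub_t_mul_X_mem hD y p)
    have hmove := Ideal.Quotient.eq.mpr (ih (p + 1))
    rw [← Ideal.Quotient.eq, ← X_mul_tProd (a := p + 1) (by omega),
      ← X_mul_tProd (a := p) (by omega), show p + 1 + (r + 1) = p + 1 + 1 + r by omega,
      show p + (r + 1) = p + 1 + r by omega]
    simp only [map_mul] at hcomm hmove ⊢
    linear_combination (Ideal.Quotient.mk J (tProd K X (p + 1 + 1) (p + 1 + 1 + r))) * hcomm +
      Ideal.Quotient.mk J (MvPolynomial.X (none, p.succPNat)) * hmove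

/-- Modulo `D` a block of `t`'s can be moved to the right past letters sitting at the places
`a + 1, …, a + s`. -/
lemma tProd_mul_monomial_mul_mem (hD : Did K X ≤ J) {a r : ℕ} {q : PL K (Option X)}
    (hq : tProd K X a (a + r) * q ∈ J) (s : ℕ) {m : (Option X × ℕ+) →₀ ℕ}
    (hm : ∀ j : ℕ+, a < (j : ℕ) → placeDeg m j = placeIoc a (a + s) j) :
    tProd K X (a + s) (a + s + r) * monomial m 1 * q ∈ J := by
  induction s generalizing q m with
  | zero =>
    rw [mul_right_comm]
    exact J.mul_mem_right _ hq
  | succ s ih =>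
    have hpos : 0 < placeDeg m (a + s).succPNat := by
      rw [hm _ (by simp), placeIoc_apply, if_pos (by simp)]
      exact Nat.one_pos
    obtain ⟨y, m', rfl⟩ := exists_eq_single_add_of_placeDeg_pos hpos
    have hm' : ∀ j : ℕ+, a < (j : ℕ) → placeDeg m' j = placeIoc a (a + s) j := by
      intro j hj
      have := hm j hj
      rw [placeDeg, Finsupp.mapDomain_add, Finsupp.mapDomain_single, Finsupp.add_apply,
        ← placeDeg, Finsupp.single_apply, placeIoc_apply] at this
      rw [placeIoc_apply]
      simp only [← PNat.coe_inj, Nat.succPNat_coe] at this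
      split_ifs at this ⊢ <;> omega
    have hIH := ih (q := MvPolynomial.X (y, (a + s + r).succPNat) * q)
      (by rw [mul_left_comm]; exact J.mul_mem_left _ hq) hm'
    have hmove := X_mul_tProd_sub_tProd_mul_X_mem hD y (a + s) r
    have hsplit : tProd K X (a + (s + 1)) (a + (s + 1) + r) *
        monomial (Finsupp.single (y, (a + s).succPNat) 1 + m') 1 * q =
        (MvPolynomial.X (y, (a + s).succPNat) * tProd K X (a + s + 1) (a + s + 1 + r) -
            tProd K X (a + s) (a + s + r) * MvPolynomial.X (y, (a + s + r).succPNat)) *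
          (monomial m' 1 * q) +
        tProd K X (a + s) (a + s + r) * monomial m' 1 *
          (MvPolynomial.X (y, (a + s + r).succPNat) * q) := by
      rw [monomial_single_add, pow_one, ← add_assoc]
      ring
    rw [hsplit]
    exact J.add_mem (J.mul_mem_right _ hmove) hIH

end DRelations

section LSaturation

variable {K : Type*} [Field K] {X : Type*} {J : Ideal (PL K (Option X))}

variable (J) in
def satLGens : Set (PL K (Option X)) :=
  {f | f ∈ Lset K ∧ ∃ d', totalDegree f ≤ d' ∧ tProd K X (totalDegree f) d' * f ∈ J}

lemma mem_satLGens_iff {f : PL K (Option X)} :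
    f ∈ satLGens J ↔ f ∈ Lset K ∧ f ∈ tColon J f.totalDegree := by
  refine and_congr_right fun _ => ⟨fun ⟨d', hd', h⟩ => ⟨d' - f.totalDegree, ?_⟩,
    fun ⟨E, h⟩ => ⟨_, Nat.le_add_right _ E, h⟩⟩
  rwa [Nat.add_sub_cancel' hd']

lemma monomial_mul_shift_mem_tColon (hJ : IsNIdeal K J) (hD : Did K X ≤ J)
    {f : PL K (Option X)} (hf : f ∈ satLGens J) {k e : ℕ} (hke : k + f.totalDegree ≤ e)
    {m : (Option X × ℕ+) →₀ ℕ}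
    (hm : ∀ j : ℕ+, k + f.totalDegree < (j : ℕ) → placeDeg m j = placeIoc (k + f.totalDegree) e j) :
    monomial m 1 * shift K k f ∈ tColon J e := by
  obtain ⟨-, r, hr⟩ := mem_satLGens_iff.mp hf
  have hshift : tProd K X (k + f.totalDegree) (k + f.totalDegree + r) * shift K k f ∈ J := by
    have := hJ k _ hr
    rwa [map_mul, shift_tProd, add_right_comm, add_comm _ k] at this
  have := tProd_mul_monomial_mul_mem hD hshift (e - (k + f.totalDegree))
    (by rwa [Nat.add_sub_cancel' hke])
  rw [Nat.add_sub_cancel' hke] at this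
  exact ⟨r, by rwa [← mul_assoc]⟩

lemma weightedHomogeneousComponent_monomial_mul_shift_mem_tColon (hJ : IsNIdeal K J)
    (hD : Did K X ≤ J) {f : PL K (Option X)} (hf : f ∈ satLGens J) (k : ℕ)
    (m : (Option X × ℕ+) →₀ ℕ) (c : K) (e : ℕ) :
    weightedHomogeneousComponent placeWeight (placeIoc 0 e) (monomial m c * shift K k f) ∈
      tColon J e := by
  set d := f.totalDegree with hd
  have hhom : IsWeightedHomogeneous placeWeight (monomial m c * shift K k f)
      (placeDeg m + placeIoc k (k + d)) := by
    have hshift := isWeightedHomogeneous_shift (isWeightedHomogeneous_of_mem_Lset hf.1) k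
    rw [mapDomain_shiftPlace_placeIoc, zero_add, add_comm d] at hshift
    exact (isWeightedHomogeneous_monomial _ m c (weight_placeWeight m)).mul hshift
  by_cases hdeg : placeDeg m + placeIoc k (k + d) = placeIoc 0 e
  swap
  · rw [hhom.weightedHomogeneousComponent_ne _ (Ne.symm hdeg)]
    exact zero_mem _
  rw [hdeg] at hhom
  rw [hhom.weightedHomogeneousComponent_same, ← mul_one c, ← C_mul_monomial, mul_assoc]
  refine Ideal.mul_mem_left _ _ ?_
  by_cases hke : k + d ≤ e
  · exact monomial_mul_shift_mem_tColon hJ hD hf hke fun j hj => placeIoc_of_add_eq hdeg hj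
  -- a generator that does not fit below place `e` is a constant, and constants are shift-invariant
  have hd0 : d = 0 := by
    by_contra h
    exact hke (le_of_add_placeIoc_eq hdeg (by omega))
  have hconst : shift K k f = shift K 0 f := by
    rw [totalDegree_eq_zero_iff_eq_C.mp hd0, shift, shift, rename_C, rename_C]
  rw [hd0, add_zero, placeIoc_self, add_zero] at hdeg
  rw [hconst]
  exact monomial_mul_shift_mem_tColon hJ hD hf (by omega) fun j _ => by rw [hdeg, ← hd, hd0]

lemma weightedHomogeneousComponent_mem_tColon (hJ : IsNIdeal K J) (hD : Did K X ≤ J)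
    {g : PL K (Option X)} (hg : g ∈ SatL K J) (e : ℕ) :
    weightedHomogeneousComponent placeWeight (placeIoc 0 e) g ∈ tColon J e := by
  suffices ∀ a, weightedHomogeneousComponent placeWeight (placeIoc 0 e) (a * g) ∈ tColon J e by
    simpa using this 1
  induction hg using Submodule.span_induction with
  | mem g hg =>
    obtain ⟨k, f, hf, rfl⟩ := hg
    intro a
    rw [a.as_sum, Finset.sum_mul, map_sum]
    exact Ideal.sum_mem _ fun m _ =>
      weightedHomogeneousComponent_monomial_mul_shift_mem_tColon hJ hD hf k m _ e
  | zero => simp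
  | add g g' _ _ h h' =>
    intro a
    rw [mul_add, map_add]
    exact add_mem (h a) (h' a)
  | smul b g _ h =>
    intro a
    rw [smul_eq_mul, ← mul_assoc]
    exact h (a * b)

lemma isLSat_satL (hJ : IsNIdeal K J) (hD : Did K X ≤ J) : IsLSat K (SatL K J) := by
  intro f hfL hf
  set d := f.totalDegree
  have hhom : IsWeightedHomogeneous placeWeight
      (MvPolynomial.X ((none : Option X), d.succPNat) * f) (placeIoc 0 (d + 1)) := by
    rw [placeIoc_succ_right (Nat.zero_le d), add_comm]
    exact (isWeightedHomogeneous_X K placeWeight _).mul (isWeightedHomogeneous_of_mem_Lset hfL)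
  have hf' : MvPolynomial.X ((none : Option X), d.succPNat) * f ∈ SatL K J := hf
  have := weightedHomogeneousComponent_mem_tColon hJ hD hf' (d + 1)
  rw [hhom.weightedHomogeneousComponent_same] at this
  obtain ⟨E, hE⟩ := this
  refine subset_nspan _ (mem_satLGens_iff.mpr ⟨hfL, E + 1, ?_⟩)
  rwa [← X_mul_tProd (by omega), mul_comm (MvPolynomial.X _), mul_assoc,
    show d + (E + 1) = d + 1 + E by omega]

lemma isLPIdeal_satL (J : Ideal (PL K (Option X))) : IsLPIdeal K (SatL K J) := by
  refine ⟨isNIdeal_nspan _, le_antisymm (nspan_mono fun f hf => ⟨subset_nspan _ hf, hf.1⟩) ?_⟩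
  exact nspan_le (isNIdeal_nspan _) Set.inter_subset_left

lemma le_satL (hJ : J = nspan K ((J : Set (PL K (Option X))) ∩ Lset K)) : J ≤ SatL K J :=
  hJ.le.trans <| nspan_mono fun f ⟨_, hfL⟩ => ⟨hfL, _, le_rfl, by rwa [tProd_self, one_mul]⟩

lemma satL_le_satP (J : Ideal (PL K (Option X))) : SatL K J ≤ SatP K J :=
  nspan_mono fun f ⟨hfL, _, _, hfJ⟩ =>
    ⟨hfL.2, _, hfJ, by rw [map_mul, psi_tProd, one_mul]⟩

end LSaturation

theorem statement_7_general (K : Type*) [Field K] (X : Type*)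
    (J : Ideal (PL K (Option X))) (hJ : IsLPIdeal K J) (hD : Did K X ≤ J) :
    IsLPIdeal K (SatL K J) ∧ IsLSat K (SatL K J) ∧ J ≤ SatL K J ∧ SatL K J ≤ SatP K J :=
  ⟨isLPIdeal_satL J, isLSat_satL hJ.1 hD, le_satL hJ.2, satL_le_satP J⟩

/-- For a letterplace ideal `D ⊆ J ⊆ P̄`, the `L`-saturation `Sat_L(J)` is an
`L`-saturated letterplace ideal containing `J`, and `Sat_L(J) ⊆ Sat(J)`. -/
theorem statement_7 (K : Type*) [Field K] (X : Type*) [Countable X]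
    (J : Ideal (PL K (Option X))) (hJ : IsLPIdeal K J) (hD : Did K X ≤ J) :
    IsLPIdeal K (SatL K J) ∧ IsLSat K (SatL K J) ∧ J ≤ SatL K J ∧ SatL K J ≤ SatP K J :=
  statement_7_general K X J hJ hD
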